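/- For all elements S, T, x of a commutative ring, B_{S+3, T+2S+5}(−x) = −D_{S,T}(x), where B_{s,u}(X) = X⁵ + (s−3)X⁴ + (u−s+3)X³ + (s²−s−2u−1)X² + uX + s and D_{S,T}(X) = X⁵ − SX⁴ + (T+S+5)X³ − (S²+S−2T−5)X² + (T+2S+5)X − (S+3). In particular Darmon's family D_{S,T} is isomorphic to Brumer's family B_{s,u} via the transformation (x,s,u) ↦ (−x, S+3, T+2S+5). -/
import Mathlib


/-- Brumer's generic quintic family `B_{s,u}`, evaluated at `X`, over a
commutative ring. -/
def B {R : Type*} [CommRing R] (s u X : R) : R :=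
  X ^ 5 + (s - 3) * X ^ 4 + (u - s + 3) * X ^ 3 + (s ^ 2 - s - 2 * u - 1) * X ^ 2
    + u * X + s

/-- Darmon's quintic family `D_{S,T}`, evaluated at `X`, over a commutative
ring. -/
def D {R : Type*} [CommRing R] (S T X : R) : R :=
  X ^ 5 - S * X ^ 4 + (T + S + 5) * X ^ 3 - (S ^ 2 + S - 2 * T - 5) * X ^ 2
    + (T + 2 * S + 5) * X - (S + 3)

/-- for all elements `S, T, x` of a commutative ring,
`B_{S+3, T+2S+5}(-x) = -D_{S,T}(x)`; i.e. Darmon's family is isomorphic to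
Brumer's family via `(x,s,u) ↦ (-x, S+3, T+2S+5)`. -/
theorem stmt_11 {R : Type*} [CommRing R] (S T x : R) :
    B (S + 3) (T + 2 * S + 5) (-x) = -D S T x := by
  simp only [B, D]; ring
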